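/- Let f, g : [a,b] → ℝ be continuous with m ≤ f(x) ≤ M for all x ∈ [a,b], and let u be of bounded variation on [a,b] with u(b) ≠ u(a). Then |(1/(u(b)−u(a)))∫_a^b f g du − (1/(u(b)−u(a)))∫_a^b f du · (1/(u(b)−u(a)))∫_a^b g du| ≤ (1/2)(M−m) · (1/|u(b)−u(a)|) · ‖g − (1/(u(b)−u(a)))∫_a^b g du‖_{∞,[a,b]} · V_a^b(u). -/

import Mathlib

open MeasureTheory Set

/-- `I` is the Riemann–Stieltjes integral of `f` with respect to `u` on `[a,b]`:
Riemann–Stieltjes sums over tagged partitions with small mesh approximate `I`. -/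
def IsRSIntegralOn (f u : ℝ → ℝ) (a b I : ℝ) : Prop :=
  ∀ ε > (0 : ℝ), ∃ δ > (0 : ℝ), ∀ (n : ℕ) (t : Fin (n + 1) → ℝ) (ξ : Fin n → ℝ),
    t 0 = a → t (Fin.last n) = b → Monotone t →
    (∀ i : Fin n, t i.castSucc ≤ ξ i ∧ ξ i ≤ t i.succ ∧ t i.succ - t i.castSucc < δ) →
    |(∑ i : Fin n, f (ξ i) * (u (t i.succ) - u (t i.castSucc))) - I| < ε

section aux

variable {a b : ℝ} {u : ℝ → ℝ}

/-- Extend a partition `t : Fin (n+1) → ℝ` to a monotone sequence `ℕ → ℝ`. -/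
private def extSeq (n : ℕ) (t : Fin (n + 1) → ℝ) : ℕ → ℝ :=
  fun j => t ⟨min j n, Nat.lt_succ_of_le (min_le_right _ _)⟩

private lemma extSeq_mono {n : ℕ} {t : Fin (n + 1) → ℝ} (ht : Monotone t) :
    Monotone (extSeq n t) := fun i j hij => ht (by simp only [Fin.mk_le_mk]; omega)

private lemma extSeq_of_le {n : ℕ} (t : Fin (n + 1) → ℝ) {j : ℕ} (hj : j ≤ n) :
    extSeq n t j = t ⟨j, Nat.lt_succ_of_le hj⟩ := by
  simp [extSeq, Nat.min_eq_left hj]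

private lemma extSeq_mem {n : ℕ} {t : Fin (n + 1) → ℝ} (ht : Monotone t)
    (h0 : t 0 = a) (hl : t (Fin.last n) = b) (j : ℕ) : extSeq n t j ∈ Icc a b := by
  constructor
  · rw [← h0]; exact ht (by simp [Fin.le_def])
  · rw [← hl]; exact ht (by simp [Fin.le_def, Fin.last])

/-- Telescoping sum. -/
private lemma telescope {n : ℕ} {t : Fin (n + 1) → ℝ} (ht : Monotone t)
    (h0 : t 0 = a) (hl : t (Fin.last n) = b) :
    (∑ i : Fin n, (u (t i.succ) - u (t i.castSucc))) = u b - u a := by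
  have key : ∀ i : Fin n, u (t i.succ) - u (t i.castSucc)
      = u (extSeq n t (↑i + 1)) - u (extSeq n t ↑i) := by
    intro i
    rw [extSeq_of_le t (by omega : (i : ℕ) + 1 ≤ n), extSeq_of_le t (le_of_lt i.2)]
    congr 2
  calc (∑ i : Fin n, (u (t i.succ) - u (t i.castSucc)))
      = ∑ i : Fin n, (u (extSeq n t (↑i + 1)) - u (extSeq n t ↑i)) := by
        exact Finset.sum_congr rfl fun i _ => key i
    _ = ∑ j ∈ Finset.range n, (u (extSeq n t (j + 1)) - u (extSeq n t j)) :=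
        Fin.sum_univ_eq_sum_range (fun j => u (extSeq n t (j + 1)) - u (extSeq n t j)) n
    _ = u (extSeq n t n) - u (extSeq n t 0) := Finset.sum_range_sub (fun j => u (extSeq n t j)) n
    _ = u b - u a := by
        rw [extSeq_of_le t (le_refl n), extSeq_of_le t (Nat.zero_le n)]
        rw [show (⟨n, Nat.lt_succ_of_le le_rfl⟩ : Fin (n+1)) = Fin.last n from rfl, hl,
          show (⟨0, Nat.lt_succ_of_le (Nat.zero_le n)⟩ : Fin (n+1)) = 0 from rfl, h0]

/-- The sum of the absolute increments of `u` along a partition is at most the variation. -/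
private lemma sum_abs_le_var (hu : BoundedVariationOn u (Icc a b)) {n : ℕ}
    {t : Fin (n + 1) → ℝ} (ht : Monotone t) (h0 : t 0 = a) (hl : t (Fin.last n) = b) :
    (∑ i : Fin n, |u (t i.succ) - u (t i.castSucc)|) ≤ (eVariationOn u (Icc a b)).toReal := by
  have key : ∀ i : Fin n, |u (t i.succ) - u (t i.castSucc)|
      = dist (u (extSeq n t (↑i + 1))) (u (extSeq n t ↑i)) := by
    intro i
    rw [extSeq_of_le t (by omega : (i : ℕ) + 1 ≤ n), extSeq_of_le t (le_of_lt i.2),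
      Real.dist_eq]
    congr 3
  rw [Finset.sum_congr rfl fun i _ => key i,
    Fin.sum_univ_eq_sum_range (fun j => dist (u (extSeq n t (j + 1))) (u (extSeq n t j))) n]
  have h1 : (∑ j ∈ Finset.range n, ENNReal.ofReal (dist (u (extSeq n t (j+1))) (u (extSeq n t j))))
      ≤ eVariationOn u (Icc a b) := by
    simpa [edist_dist] using
      eVariationOn.sum_le (f := u) (n := n) (extSeq_mono ht) (extSeq_mem ht h0 hl)
  calc (∑ j ∈ Finset.range n, dist (u (extSeq n t (j+1))) (u (extSeq n t j)))
      = (∑ j ∈ Finset.range n,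
          ENNReal.ofReal (dist (u (extSeq n t (j+1))) (u (extSeq n t j)))).toReal := by
        rw [ENNReal.toReal_sum (fun j _ => ENNReal.ofReal_ne_top)]
        exact (Finset.sum_congr rfl fun j _ => (ENNReal.toReal_ofReal dist_nonneg).symm)
    _ ≤ (eVariationOn u (Icc a b)).toReal := ENNReal.toReal_mono hu h1

/-- An RS integral of a bounded integrand is bounded by bound times variation. -/
private lemma abs_RS_le (hab : a < b) (hu : BoundedVariationOn u (Icc a b))
    {h : ℝ → ℝ} {I B : ℝ} (hB : 0 ≤ B) (hbd : ∀ x ∈ Icc a b, |h x| ≤ B)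
    (hI : IsRSIntegralOn h u a b I) :
    |I| ≤ B * (eVariationOn u (Icc a b)).toReal := by
  refine le_of_forall_pos_le_add fun ε hε => ?_
  obtain ⟨δ, hδ, hP⟩ := hI ε hε
  obtain ⟨N, hN⟩ := exists_nat_gt ((b - a) / δ)
  set n := N + 1 with hn
  have hnpos : (0 : ℝ) < n := by positivity
  have hmesh : (b - a) / n < δ := by
    rw [div_lt_iff₀ hnpos]
    have : (b - a) / δ < n := lt_of_lt_of_le hN (by exact_mod_cast Nat.le_succ N)
    calc b - a = ((b - a) / δ) * δ := by field_simp
      _ < ↑n * δ := mul_lt_mul_of_pos_right this hδ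
      _ = δ * ↑n := mul_comm _ _
  set c : ℝ := (b - a) / n with hc
  have hc0 : 0 ≤ c := by
    apply div_nonneg (by linarith) (le_of_lt hnpos)
  set t : Fin (n + 1) → ℝ := fun i => a + (i : ℝ) * c with htdef
  have ht0 : t 0 = a := by simp [htdef]
  have htl : t (Fin.last n) = b := by
    simp only [htdef, Fin.val_last, hc]
    field_simp
    ring
  have htm : Monotone t := by
    intro i j hij
    simp only [htdef]
    have : (i : ℝ) ≤ (j : ℝ) := by exact_mod_cast hij
    nlinarith
  set ξ : Fin n → ℝ := fun i => t i.castSucc with hξ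
  have hcond : ∀ i : Fin n, t i.castSucc ≤ ξ i ∧ ξ i ≤ t i.succ ∧
      t i.succ - t i.castSucc < δ := by
    intro i
    have hstep : t i.succ - t i.castSucc = c := by
      simp only [htdef, Fin.coe_castSucc, Fin.val_succ]
      push_cast
      ring
    refine ⟨le_rfl, ?_, by rw [hstep]; exact hmesh⟩
    show t i.castSucc ≤ t i.succ
    exact htm (by simp [Fin.le_def])
  have hsum := hP n t ξ ht0 htl htm hcond
  have hξmem : ∀ i : Fin n, ξ i ∈ Icc a b := by
    intro i
    constructor
    · rw [← ht0]; exact htm (by simp [Fin.le_def])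
    · rw [← htl]; exact htm (by simp [Fin.le_def, Fin.last])
  have hS : |∑ i : Fin n, h (ξ i) * (u (t i.succ) - u (t i.castSucc))|
      ≤ B * (eVariationOn u (Icc a b)).toReal := by
    calc |∑ i : Fin n, h (ξ i) * (u (t i.succ) - u (t i.castSucc))|
        ≤ ∑ i : Fin n, |h (ξ i) * (u (t i.succ) - u (t i.castSucc))| :=
          Finset.abs_sum_le_sum_abs _ _
      _ ≤ ∑ i : Fin n, B * |u (t i.succ) - u (t i.castSucc)| := by
          apply Finset.sum_le_sum
          intro i _
          rw [abs_mul]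
          exact mul_le_mul_of_nonneg_right (hbd _ (hξmem i)) (abs_nonneg _)
      _ = B * ∑ i : Fin n, |u (t i.succ) - u (t i.castSucc)| := by
          rw [Finset.mul_sum]
      _ ≤ B * (eVariationOn u (Icc a b)).toReal :=
          mul_le_mul_of_nonneg_left (sum_abs_le_var hu htm ht0 htl) hB
  calc |I| ≤ |∑ i : Fin n, h (ξ i) * (u (t i.succ) - u (t i.castSucc))| + ε := by
        have := abs_sub_abs_le_abs_sub I
          (∑ i : Fin n, h (ξ i) * (u (t i.succ) - u (t i.castSucc)))
        rw [abs_sub_comm] at this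
        linarith [hsum]
    _ ≤ B * (eVariationOn u (Icc a b)).toReal + ε := by linarith

/-- Linear combination of RS integrals. -/
private lemma RS_combo {f g : ℝ → ℝ} {Ifg If Ig : ℝ} (k c : ℝ)
    (hIfg : IsRSIntegralOn (fun x => f x * g x) u a b Ifg)
    (hIf : IsRSIntegralOn f u a b If)
    (hIg : IsRSIntegralOn g u a b Ig) :
    IsRSIntegralOn (fun x => (f x - k) * (g x - c)) u a b
      (Ifg - c * If - k * Ig + k * c * (u b - u a)) := by
  intro ε hε
  have hd : (0 : ℝ) < 1 + |c| + |k| := by positivity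
  set ε' : ℝ := ε / (3 * (1 + |c| + |k|)) with hε'def
  have hε' : 0 < ε' := by positivity
  obtain ⟨δ1, hδ1, hP1⟩ := hIfg ε' hε'
  obtain ⟨δ2, hδ2, hP2⟩ := hIf ε' hε'
  obtain ⟨δ3, hδ3, hP3⟩ := hIg ε' hε'
  refine ⟨min δ1 (min δ2 δ3), by positivity, ?_⟩
  intro n t ξ h0 hl hm hcond
  have hc1 : ∀ i : Fin n, t i.castSucc ≤ ξ i ∧ ξ i ≤ t i.succ ∧
      t i.succ - t i.castSucc < δ1 := fun i =>
    ⟨(hcond i).1, (hcond i).2.1, lt_of_lt_of_le (hcond i).2.2 (min_le_left _ _)⟩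
  have hc2 : ∀ i : Fin n, t i.castSucc ≤ ξ i ∧ ξ i ≤ t i.succ ∧
      t i.succ - t i.castSucc < δ2 := fun i =>
    ⟨(hcond i).1, (hcond i).2.1, lt_of_lt_of_le (hcond i).2.2
      ((min_le_right _ _).trans (min_le_left _ _))⟩
  have hc3 : ∀ i : Fin n, t i.castSucc ≤ ξ i ∧ ξ i ≤ t i.succ ∧
      t i.succ - t i.castSucc < δ3 := fun i =>
    ⟨(hcond i).1, (hcond i).2.1, lt_of_lt_of_le (hcond i).2.2
      ((min_le_right _ _).trans (min_le_right _ _))⟩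
  have h1 := hP1 n t ξ h0 hl hm hc1
  have h2 := hP2 n t ξ h0 hl hm hc2
  have h3 := hP3 n t ξ h0 hl hm hc3
  have htel := telescope (u := u) hm h0 hl
  have hsplit : (∑ i : Fin n, (f (ξ i) - k) * (g (ξ i) - c) * (u (t i.succ) - u (t i.castSucc)))
      = (∑ i : Fin n, f (ξ i) * g (ξ i) * (u (t i.succ) - u (t i.castSucc)))
        - c * (∑ i : Fin n, f (ξ i) * (u (t i.succ) - u (t i.castSucc)))
        - k * (∑ i : Fin n, g (ξ i) * (u (t i.succ) - u (t i.castSucc)))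
        + k * c * (u b - u a) := by
    rw [← htel, Finset.mul_sum, Finset.mul_sum, Finset.mul_sum,
      ← Finset.sum_sub_distrib, ← Finset.sum_sub_distrib, ← Finset.sum_add_distrib]
    exact Finset.sum_congr rfl fun i _ => by ring
  rw [hsplit]
  have key : |((∑ i : Fin n, f (ξ i) * g (ξ i) * (u (t i.succ) - u (t i.castSucc)))
        - c * (∑ i : Fin n, f (ξ i) * (u (t i.succ) - u (t i.castSucc)))
        - k * (∑ i : Fin n, g (ξ i) * (u (t i.succ) - u (t i.castSucc)))
        + k * c * (u b - u a))
      - (Ifg - c * If - k * Ig + k * c * (u b - u a))|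
      ≤ |(∑ i : Fin n, f (ξ i) * g (ξ i) * (u (t i.succ) - u (t i.castSucc))) - Ifg|
        + |c| * |(∑ i : Fin n, f (ξ i) * (u (t i.succ) - u (t i.castSucc))) - If|
        + |k| * |(∑ i : Fin n, g (ξ i) * (u (t i.succ) - u (t i.castSucc))) - Ig| := by
    set A := (∑ i : Fin n, f (ξ i) * g (ξ i) * (u (t i.succ) - u (t i.castSucc))) - Ifg
    set B := (∑ i : Fin n, f (ξ i) * (u (t i.succ) - u (t i.castSucc))) - If
    set C := (∑ i : Fin n, g (ξ i) * (u (t i.succ) - u (t i.castSucc))) - Ig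
    have : ((∑ i : Fin n, f (ξ i) * g (ξ i) * (u (t i.succ) - u (t i.castSucc)))
        - c * (∑ i : Fin n, f (ξ i) * (u (t i.succ) - u (t i.castSucc)))
        - k * (∑ i : Fin n, g (ξ i) * (u (t i.succ) - u (t i.castSucc)))
        + k * c * (u b - u a))
        - (Ifg - c * If - k * Ig + k * c * (u b - u a)) = A - c * B - k * C := by
      simp only [A, B, C]; ring
    rw [this]
    calc |A - c * B - k * C| ≤ |A - c * B| + |k * C| := abs_sub _ _
      _ ≤ |A| + |c * B| + |k * C| := by linarith [abs_sub A (c * B)]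
      _ = |A| + |c| * |B| + |k| * |C| := by rw [abs_mul, abs_mul]
  have hfin : |(∑ i : Fin n, f (ξ i) * g (ξ i) * (u (t i.succ) - u (t i.castSucc))) - Ifg|
        + |c| * |(∑ i : Fin n, f (ξ i) * (u (t i.succ) - u (t i.castSucc))) - If|
        + |k| * |(∑ i : Fin n, g (ξ i) * (u (t i.succ) - u (t i.castSucc))) - Ig|
      < ε := by
    have e1 : |(∑ i : Fin n, f (ξ i) * g (ξ i) * (u (t i.succ) - u (t i.castSucc))) - Ifg|
        < ε' := h1
    have hεeq : ε = ε' * (3 * (1 + |c| + |k|)) := by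
      rw [hε'def]; field_simp
    have hcb : |c| * |(∑ i : Fin n, f (ξ i) * (u (t i.succ) - u (t i.castSucc))) - If|
        ≤ |c| * ε' := mul_le_mul_of_nonneg_left (le_of_lt h2) (abs_nonneg _)
    have hkb : |k| * |(∑ i : Fin n, g (ξ i) * (u (t i.succ) - u (t i.castSucc))) - Ig|
        ≤ |k| * ε' := mul_le_mul_of_nonneg_left (le_of_lt h3) (abs_nonneg _)
    have : ε' + |c| * ε' + |k| * ε' ≤ ε := by
      rw [hεeq]
      nlinarith [abs_nonneg c, abs_nonneg k, le_of_lt hε']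
    linarith
  exact lt_of_le_of_lt key hfin

end aux

theorem gruss_type_stieltjes
    (a b m M Ifg If Ig : ℝ) (f g u : ℝ → ℝ) (hab : a < b)
    (hf : ContinuousOn f (Icc a b))
    (hg : ContinuousOn g (Icc a b))
    (hbound : ∀ x ∈ Icc a b, m ≤ f x ∧ f x ≤ M)
    (hu : BoundedVariationOn u (Icc a b))
    (hne : u b ≠ u a)
    (hIfg : IsRSIntegralOn (fun x => f x * g x) u a b Ifg)
    (hIf : IsRSIntegralOn f u a b If)
    (hIg : IsRSIntegralOn g u a b Ig) :
    |(1 / (u b - u a)) * Ifg - (1 / (u b - u a)) * If * ((1 / (u b - u a)) * Ig)| ≤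
      (1 / 2) * (M - m) * (1 / |u b - u a|) *
        sSup ((fun x => |g x - (1 / (u b - u a)) * Ig|) '' Icc a b) *
        (eVariationOn u (Icc a b)).toReal := by
  set D := u b - u a with hD
  have hD0 : D ≠ 0 := sub_ne_zero.mpr hne
  set c : ℝ := (1 / D) * Ig with hcdef
  set k : ℝ := (m + M) / 2 with hkdef
  set S := sSup ((fun x => |g x - c|) '' Icc a b) with hSdef
  have hamem : a ∈ Icc a b := ⟨le_refl a, le_of_lt hab⟩
  have hmM : m ≤ M := le_trans (hbound a hamem).1 (hbound a hamem).2
  -- sSup facts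
  have hcompact : IsCompact ((fun x => |g x - c|) '' Icc a b) :=
    isCompact_Icc.image_of_continuousOn ((hg.sub continuousOn_const).abs)
  have hbdd : BddAbove ((fun x => |g x - c|) '' Icc a b) := hcompact.bddAbove
  have hSle : ∀ x ∈ Icc a b, |g x - c| ≤ S := fun x hx =>
    le_csSup hbdd (mem_image_of_mem _ hx)
  have hS0 : 0 ≤ S := le_trans (abs_nonneg _) (hSle a hamem)
  -- the combined integral
  have hcombo := RS_combo (u := u) (a := a) (b := b) k c hIfg hIf hIg
  have hcD : c * D = Ig := by rw [hcdef]; field_simp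
  have hval : Ifg - c * If - k * Ig + k * c * D = Ifg - c * If := by
    have : k * (c * D) = k * Ig := by rw [hcD]
    nlinarith [this]
  rw [hval] at hcombo
  -- bound on the integrand
  have hbd : ∀ x ∈ Icc a b, |(f x - k) * (g x - c)| ≤ (M - m) / 2 * S := by
    intro x hx
    rw [abs_mul]
    have h1 : |f x - k| ≤ (M - m) / 2 := by
      rw [abs_le, hkdef]
      constructor <;> [linarith [(hbound x hx).1]; linarith [(hbound x hx).2]]
    exact mul_le_mul h1 (hSle x hx) (abs_nonneg _) (by linarith)
  have hB0 : (0 : ℝ) ≤ (M - m) / 2 * S := by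
    apply mul_nonneg (by linarith) hS0
  have hmain := abs_RS_le hab hu hB0 hbd hcombo
  -- conclude
  have hDa : |1 / D| = 1 / |D| := by rw [abs_div, abs_one]
  have hLHS : |(1 / D) * Ifg - (1 / D) * If * ((1 / D) * Ig)|
      = (1 / |D|) * |Ifg - c * If| := by
    rw [← hDa, ← abs_mul]
    congr 1
    rw [hcdef]; ring
  rw [hLHS]
  have hDpos : 0 < 1 / |D| := by positivity
  calc (1 / |D|) * |Ifg - c * If|
      ≤ (1 / |D|) * ((M - m) / 2 * S * (eVariationOn u (Icc a b)).toReal) :=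
        mul_le_mul_of_nonneg_left hmain (le_of_lt hDpos)
    _ = (1 / 2) * (M - m) * (1 / |D|) * S * (eVariationOn u (Icc a b)).toReal := by ring
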